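/- arXiv:2002.11184 — 3 statements merged into one kernel-verified Lean document; each statement's English description precedes it below -/
import Mathlib

section
/- Let k ≥ 2, let t_1 < t_2 < ... < t_k be real sample times, and let a_2, ..., a_k be attachment times with a_j ≤ t_{j-1} for all j. Define the lineage count functions ℓ_j recursively by ℓ_1(t) = 1 for t < t_1 and 0 otherwise, and ℓ_{j+1}(t) = ℓ_j(t) + 1 for a_{j+1} ≤ t < t_{j+1} and ℓ_{j+1}(t) = ℓ_j(t) otherwise. Then ∑_{j=2}^k ∫_{a_j}^{∞} ℓ_{j-1}(t) dt = ∫_{-∞}^{∞} C(ℓ_k(t), 2) dt. -/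
open MeasureTheory Set

/-! Attaching lineage `j + 1` on `[a_{j+1}, t_{j+1})` raises `C(ℓ_j, 2)` to `C(ℓ_j + 1, 2)` there,
an increase of exactly `ℓ_j`; above `t_{j+1}` the count `ℓ_j` is already zero. Hence each
attachment integral `∫_{a_{j+1}}^∞ ℓ_j` equals `∫ C(ℓ_{j+1}, 2) - ∫ C(ℓ_j, 2)`, and the sum
telescopes to `∫ C(ℓ_k, 2)` because `ℓ_1 ≤ 1`. -/

lemma Nat.cast_choose_two_succ_sub {R : Type*} [AddGroupWithOne R] (n : ℕ) :
    ((n + 1).choose 2 : R) - n.choose 2 = n := by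
  rw [Nat.choose_succ_succ' n 1, Nat.choose_one_right, Nat.cast_add, add_sub_cancel_right]

section Attachment

variable {m m' : ℝ → ℕ} {a T : ℝ}

lemma indicator_Ici_eq_choose_two_sub
    (hm' : ∀ s, m' s = if a ≤ s ∧ s < T then m s + 1 else m s)
    (hm : ∀ s, T ≤ s → m s = 0) (s : ℝ) :
    (Ici a).indicator (fun s => (m s : ℝ)) s = ((m' s).choose 2 : ℝ) - (m s).choose 2 := by
  by_cases has : a ≤ s
  · rw [indicator_of_mem (mem_Ici.2 has)]
    by_cases hsT : s < T
    · rw [hm' s, if_pos ⟨has, hsT⟩, Nat.cast_choose_two_succ_sub]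
    · rw [hm' s, if_neg (fun h => hsT h.2), hm s (not_lt.1 hsT)]
      simp
  · rw [indicator_of_notMem (fun h => has (mem_Ici.1 h)), hm' s, if_neg (fun h => has h.1),
      sub_self]

lemma setIntegral_Ici_eq_integral_choose_two_sub
    (hm' : ∀ s, m' s = if a ≤ s ∧ s < T then m s + 1 else m s)
    (hm : ∀ s, T ≤ s → m s = 0)
    (him : Integrable (fun s => ((m s).choose 2 : ℝ)))
    (him' : Integrable (fun s => ((m' s).choose 2 : ℝ))) :
    ∫ s in Ici a, (m s : ℝ) = (∫ s, ((m' s).choose 2 : ℝ)) - ∫ s, ((m s).choose 2 : ℝ) := by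
  rw [← integral_indicator measurableSet_Ici, ← integral_sub him' him]
  exact integral_congr_ae (Filter.Eventually.of_forall
    (indicator_Ici_eq_choose_two_sub hm' hm))

end Attachment

lemma lineage_eq_zero_of_le {k : ℕ} {t a : ℕ → ℝ} {ℓ : ℕ → ℝ → ℕ}
    (ht : ∀ j, 1 ≤ j → j < k → t j ≤ t (j + 1))
    (hℓ1 : ∀ s, ℓ 1 s = if s < t 1 then 1 else 0)
    (hℓsucc : ∀ j, 1 ≤ j → j < k → ∀ s,
      ℓ (j + 1) s = if a (j + 1) ≤ s ∧ s < t (j + 1) then ℓ j s + 1 else ℓ j s) :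
    ∀ j, 1 ≤ j → j ≤ k → ∀ s, t j ≤ s → ℓ j s = 0 := by
  refine Nat.le_induction ?_ fun j hj ih hjk s hs => ?_
  · intro _ s hs
    rw [hℓ1, if_neg (not_lt.2 hs)]
  · rw [hℓsucc j hj hjk, if_neg (fun h => (not_lt.2 hs) h.2)]
    exact ih (Nat.le_of_succ_le hjk) s ((ht j hj hjk).trans hs)

theorem lineage_count_sum_general (k : ℕ) (hk : 2 ≤ k)
    (t a : ℕ → ℝ) (ℓ : ℕ → ℝ → ℕ)
    (ht : ∀ i j, 1 ≤ i → i < j → j ≤ k → t i < t j)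
    (hℓ1 : ∀ s, ℓ 1 s = if s < t 1 then 1 else 0)
    (hℓsucc : ∀ j, 1 ≤ j → j < k → ∀ s,
      ℓ (j + 1) s = if a (j + 1) ≤ s ∧ s < t (j + 1) then ℓ j s + 1 else ℓ j s)
    (hint : ∀ j, 1 ≤ j → j ≤ k → Integrable (fun s => ((ℓ j s).choose 2 : ℝ))) :
    (∑ j ∈ Finset.Icc 2 k, ∫ s in Set.Ici (a j), (ℓ (j - 1) s : ℝ)) =
      ∫ s, ((ℓ k s).choose 2 : ℝ) := by
  set F : ℕ → ℝ := fun j => ∫ s, ((ℓ j s).choose 2 : ℝ)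
  have hmono : ∀ j, 1 ≤ j → j < k → t j ≤ t (j + 1) :=
    fun j hj hjk => (ht j (j + 1) hj j.lt_succ_self hjk).le
  have hvanish := lineage_eq_zero_of_le hmono hℓ1 hℓsucc
  obtain ⟨n, rfl⟩ : ∃ n, k = n + 1 := ⟨k - 1, by omega⟩
  have hterm : ∀ j ∈ Finset.Icc 1 n, ∫ s in Ici (a (j + 1)), (ℓ j s : ℝ) = F (j + 1) - F j := by
    intro j hj
    obtain ⟨hj1, hjn⟩ := Finset.mem_Icc.1 hj
    exact setIntegral_Ici_eq_integral_choose_two_sub (hℓsucc j hj1 (by omega))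
      (fun s hs => hvanish j hj1 (by omega) s ((hmono j hj1 (by omega)).trans hs))
      (hint j hj1 (by omega)) (hint (j + 1) (by omega) (by omega))
  have hF1 : F 1 = 0 := by
    have hchoose : ∀ s, (ℓ 1 s).choose 2 = 0 := fun s => by rw [hℓ1]; split <;> rfl
    simp [F, hchoose]
  rw [← Finset.map_add_right_Icc 1 n 1, Finset.sum_map]
  simp only [addRightEmbedding_apply, Nat.add_sub_cancel]
  rw [Finset.sum_congr rfl hterm, Finset.sum_Icc_sub (by omega), hF1, sub_zero]

/-- The sum of sequential-attachment integrals equals the coalescent-rate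
integral: `∑_{j=2}^k ∫_{a_j}^∞ ℓ_{j-1}(t) dt = ∫_{-∞}^∞ C(ℓ_k(t),2) dt`. -/
theorem lineage_count_sum (k : ℕ) (hk : 2 ≤ k)
    (t a : ℕ → ℝ) (ℓ : ℕ → ℝ → ℕ)
    (ht : ∀ i j, 1 ≤ i → i < j → j ≤ k → t i < t j)
    (ha : ∀ j, 2 ≤ j → j ≤ k → a j ≤ t (j - 1))
    (hℓ1 : ∀ s, ℓ 1 s = if s < t 1 then 1 else 0)
    (hℓsucc : ∀ j, 1 ≤ j → j < k → ∀ s,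
      ℓ (j + 1) s = if a (j + 1) ≤ s ∧ s < t (j + 1) then ℓ j s + 1 else ℓ j s)
    (hint : ∀ j, 1 ≤ j → j ≤ k → Integrable (fun s => ((ℓ j s).choose 2 : ℝ)))
    (hintl : ∀ j, 1 ≤ j → j ≤ k →
      IntegrableOn (fun s => (ℓ j s : ℝ)) (Set.Ici (a (j + 1)))) :
    (∑ j ∈ Finset.Icc 2 k, ∫ s in Set.Ici (a j), (ℓ (j - 1) s : ℝ)) =
      ∫ s, ((ℓ k s).choose 2 : ℝ) :=
  lineage_count_sum_general k hk t a ℓ ht hℓ1 hℓsucc hint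
end

section
/- For m ≥ 1, the exponential densities p_m(s) = C(m+1,2)·e^{−C(m+1,2)s} and p_{m+1}(s) = C(m+2,2)·e^{−C(m+2,2)s} with convolution Q_m(s) = ∫_0^s p_m(t)p_{m+1}(s−t)dt satisfy the stationarity equation p_{m+1}(s) + (2/m)·Q_m(s) − (1 + 2/m)·p_m(s) = 0 for all s ≥ 0 if and only if this holds with the explicit formula Q_m(s) = C(m+1,2)C(m+2,2)(e^{−C(m+1,2)s} − e^{−C(m+2,2)s})/(m+1); verify that it does hold for all s ≥ 0. -/
/-!
Since `C(m+2,2) − C(m+1,2) = m + 1`, the convolution of the two exponential densities is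
`C(m+1,2) C(m+2,2) (e^{−C(m+1,2)s} − e^{−C(m+2,2)s}) / (m+1)`. Its coefficient
`(2/m) C(m+1,2) C(m+2,2) / (m+1)` equals `C(m+2,2)`, and so does `(1 + 2/m) C(m+1,2)`; hence both
exponentials cancel.
-/

open Real intervalIntegral

theorem integral_exponential_density_convolution {a b : ℝ} (hab : a ≠ b) (s : ℝ) :
    ∫ t in (0:ℝ)..s, (a * exp (-a * t)) * (b * exp (-b * (s - t))) =
      a * b * (exp (-a * s) - exp (-b * s)) / (b - a) := by
  have hba : b - a ≠ 0 := sub_ne_zero.mpr hab.symm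
  have hF : ∀ t ∈ Set.uIcc (0:ℝ) s,
      HasDerivAt (fun t => a * b * exp (-a * t + -b * (s - t)) / (b - a))
        ((a * exp (-a * t)) * (b * exp (-b * (s - t)))) t := by
    intro t _
    refine ((((hasDerivAt_id t).const_mul (-a)).add
      (((hasDerivAt_id t).const_sub s).const_mul (-b))).exp.const_mul (a * b)
      |>.div_const (b - a)).congr_deriv ?_
    simp only [Pi.add_apply, id, exp_add]
    field_simp
    ring
  rw [integral_eq_sub_of_hasDerivAt hF (Continuous.intervalIntegrable (by fun_prop) _ _)]
  simp only [mul_zero, zero_add, sub_zero, sub_self, add_zero]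
  ring_nf

theorem choose_two_succ_succ_sub_choose_two_succ (m : ℕ) :
    ((m + 2).choose 2 : ℝ) - (m + 1).choose 2 = m + 1 := by
  simp only [Nat.cast_choose_two]
  push_cast
  ring

theorem stationarity_equation_general (m : ℕ) (hm : 1 ≤ m) (s : ℝ) :
    (((m + 2).choose 2 : ℝ) * Real.exp (-((m + 2).choose 2 : ℝ) * s)) +
      (2 / (m : ℝ)) *
        (∫ t in (0:ℝ)..s,
          (((m + 1).choose 2 : ℝ) * Real.exp (-((m + 1).choose 2 : ℝ) * t)) *
          (((m + 2).choose 2 : ℝ) * Real.exp (-((m + 2).choose 2 : ℝ) * (s - t)))) -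
      (1 + 2 / (m : ℝ)) *
        (((m + 1).choose 2 : ℝ) * Real.exp (-((m + 1).choose 2 : ℝ) * s)) = 0 := by
  have hgap := choose_two_succ_succ_sub_choose_two_succ m
  have hne : ((m + 1).choose 2 : ℝ) ≠ (m + 2).choose 2 :=
    (sub_pos.mp (by rw [hgap]; positivity)).ne
  rw [integral_exponential_density_convolution hne, hgap]
  have hm0 : (m : ℝ) ≠ 0 := Nat.cast_ne_zero.mpr (by omega)
  simp only [Nat.cast_choose_two]
  push_cast
  field_simp
  ring

/-- The marginal stationarity equation
`p_{m+1}(s) + (2/m)Q_m(s) − (1+2/m)p_m(s) = 0` holds for all `s ≥ 0`, where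
`Q_m` is the convolution of `p_m` and `p_{m+1}`. -/
theorem stationarity_equation (m : ℕ) (hm : 1 ≤ m) (s : ℝ) (hs : 0 ≤ s) :
    (((m + 2).choose 2 : ℝ) * Real.exp (-((m + 2).choose 2 : ℝ) * s)) +
      (2 / (m : ℝ)) *
        (∫ t in (0:ℝ)..s,
          (((m + 1).choose 2 : ℝ) * Real.exp (-((m + 1).choose 2 : ℝ) * t)) *
          (((m + 2).choose 2 : ℝ) * Real.exp (-((m + 2).choose 2 : ℝ) * (s - t)))) -
      (1 + 2 / (m : ℝ)) *
        (((m + 1).choose 2 : ℝ) * Real.exp (-((m + 1).choose 2 : ℝ) * s)) = 0 :=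
  stationarity_equation_general m hm s
end

section
/- Suppose p_m satisfies the equation p_{m+1}(s) + (2/m)Q_m(s) − (1+2/m)p_m(s) = 0 for s > 0, where Q_m(s) = ∫_0^s p_m(t)p_{m+1}(s−t)dt, p_{m+1}(s) = C(m+2,2)e^{−C(m+2,2)s}, and p_m is continuously differentiable with p_m(0) finite. Then p_m satisfies p_m'(s) + C(m+1,2)·p_m(s) = 0 for s > 0, and hence p_m(s) = p_m(0)·e^{−C(m+1,2)·s}. -/
/-!
Multiplying the stationarity equation by `e^{cs}`, with `c = C(m+2,2)`, expresses `e^{cs} p(s)`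
as an affine function of the primitive `∫_0^s p(t) e^{ct} dt`. Differentiating turns the
integral equation into the linear ODE `p' = (2c/(m+2) - c) p = -C(m+1,2) p`, whose only
solution continuous at `0` is `p(0) e^{-C(m+1,2) s}`.
-/

open Real intervalIntegral Set

theorem integral_mul_exp_neg_mul_sub (f : ℝ → ℝ) (c u s : ℝ) :
    ∫ t in u..s, f t * exp (-c * (s - t)) = exp (-c * s) * ∫ t in u..s, f t * exp (c * t) := by
  rw [← integral_const_mul]
  refine integral_congr fun t _ => ?_
  rw [show -c * (s - t) = -c * s + c * t by ring, exp_add]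
  ring

theorem hasDerivAt_of_eq_exp_mul_integral {p : ℝ → ℝ} (hp : Continuous p) {α β c : ℝ}
    (hrep : ∀ s, 0 < s → p s = exp (-c * s) * (α + β * ∫ t in (0:ℝ)..s, p t * exp (c * t)))
    {s : ℝ} (hs : 0 < s) : HasDerivAt p ((β - c) * p s) s := by
  have hF : HasDerivAt (fun s => ∫ t in (0:ℝ)..s, p t * exp (c * t)) (p s * exp (c * s)) s :=
    ((hp.mul (continuous_const.mul continuous_id).rexp).integral_hasStrictDerivAt 0 s).hasDerivAt
  have hg := ((hasDerivAt_id' s).const_mul (-c)).exp.mul ((hF.const_mul β).const_add α)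
  have hpg : (fun s => exp (-c * s) * (α + β * ∫ t in (0:ℝ)..s, p t * exp (c * t))) =ᶠ[nhds s] p :=
    Filter.eventually_of_mem (isOpen_Ioi.mem_nhds hs) fun x hx => (hrep x hx).symm
  refine (hg.congr_of_eventuallyEq hpg.symm).congr_deriv ?_
  have hcancel : exp (-c * s) * exp (c * s) = 1 := by rw [← exp_add]; simp
  linear_combination β * p s * hcancel + c * hrep s hs

theorem hasDerivAt_of_stationarity {p : ℝ → ℝ} (hp : Continuous p) {a b c : ℝ} (hb : b ≠ 0)
    (heq : ∀ s, 0 < s →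
      c * exp (-c * s) + a * (∫ t in (0:ℝ)..s, p t * (c * exp (-c * (s - t)))) - b * p s = 0)
    {s : ℝ} (hs : 0 < s) : HasDerivAt p ((a * c / b - c) * p s) s := by
  refine hasDerivAt_of_eq_exp_mul_integral hp (α := c / b) (fun x hx => ?_) hs
  have hx := heq x hx
  simp only [mul_left_comm (p _) c] at hx
  rw [integral_const_mul, integral_mul_exp_neg_mul_sub] at hx
  field_simp
  simp only [neg_mul] at hx ⊢
  linear_combination -hx

theorem eq_mul_exp_of_hasDerivAt {p : ℝ → ℝ} (hp : ContinuousOn p (Ici 0)) {k : ℝ}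
    (hd : ∀ s, 0 < s → HasDerivAt p (-k * p s) s) {s : ℝ} (hs : 0 ≤ s) :
    p s = p 0 * exp (-k * s) := by
  rcases hs.eq_or_lt with rfl | hs
  · simp
  set h : ℝ → ℝ := fun s => p s * exp (k * s)
  have hh : ∀ x, 0 < x → HasDerivAt h 0 x := by
    intro x hx
    refine ((hd x hx).mul ((hasDerivAt_id' x).const_mul k).exp).congr_deriv ?_
    ring
  have hhc : ContinuousOn h (Icc 0 s) :=
    (hp.mono Icc_subset_Ici_self).mul (continuous_const.mul continuous_id).rexp.continuousOn
  obtain ⟨-, -, hslope⟩ := exists_hasDerivAt_eq_slope h (fun _ => 0) hs hhc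
    fun x hx => hh x hx.1
  have hconst : p s * exp (k * s) = p 0 := by
    rw [sub_zero, eq_div_iff hs.ne', zero_mul, eq_comm, sub_eq_zero] at hslope
    simpa [h] using hslope
  rw [neg_mul, exp_neg, ← hconst, mul_inv_cancel_right₀ (exp_pos _).ne']

theorem stationarity_rate_eq_neg_choose_two {m : ℕ} (hm : m ≠ 0) :
    (2 / (m : ℝ)) * ((m + 2).choose 2 : ℝ) / (1 + 2 / (m : ℝ)) - ((m + 2).choose 2 : ℝ) =
      -((m + 1).choose 2 : ℝ) := by
  have hm' : (m : ℝ) ≠ 0 := Nat.cast_ne_zero.mpr hm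
  simp only [Nat.cast_choose_two]
  push_cast
  field_simp
  ring

/-- If `p_m` is C¹ and satisfies the stationarity equation with the explicit
exponential `p_{m+1}` and convolution `Q_m`, then `p_m' + C(m+1,2)p_m = 0` on
`(0,∞)`, hence `p_m(s) = p_m(0)e^{−C(m+1,2)s}`. -/
theorem stationarity_forces_exponential (m : ℕ) (hm : 1 ≤ m) (p : ℝ → ℝ)
    (hp : ContDiff ℝ 1 p)
    (heq : ∀ s : ℝ, 0 < s →
      (((m + 2).choose 2 : ℝ) * Real.exp (-((m + 2).choose 2 : ℝ) * s)) +
        (2 / (m : ℝ)) *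
          (∫ t in (0:ℝ)..s,
            p t * (((m + 2).choose 2 : ℝ) * Real.exp (-((m + 2).choose 2 : ℝ) * (s - t)))) -
        (1 + 2 / (m : ℝ)) * p s = 0) :
    (∀ s : ℝ, 0 < s → deriv p s + ((m + 1).choose 2 : ℝ) * p s = 0) ∧
    (∀ s : ℝ, 0 ≤ s → p s = p 0 * Real.exp (-((m + 1).choose 2 : ℝ) * s)) := by
  have hb : 1 + 2 / (m : ℝ) ≠ 0 := by positivity
  have hode : ∀ s : ℝ, 0 < s → HasDerivAt p (-((m + 1).choose 2 : ℝ) * p s) s := by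
    intro s hs
    rw [← stationarity_rate_eq_neg_choose_two (by omega)]
    exact hasDerivAt_of_stationarity hp.continuous hb heq hs
  refine ⟨fun s hs => ?_, fun s hs => eq_mul_exp_of_hasDerivAt hp.continuous.continuousOn hode hs⟩
  rw [(hode s hs).deriv]
  ring
end
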